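/- For any poset (X, ≤), each equivalence class of the partially commutative monoid L(X, ≤) contains exactly one maximal word, i.e., exactly one word with empty rise set. -/

import Mathlib

/-- Adjacency in the free monoid over a poset: swap of two adjacent,
distinct and comparable letters. -/
inductive PCM.Adj {X : Type*} [PartialOrder X] : List X → List X → Prop
  | swap (u v : List X) (a b : X) (hne : a ≠ b) (hcomp : a ≤ b ∨ b ≤ a) :
      PCM.Adj (u ++ a :: b :: v) (u ++ b :: a :: v)

/-- Equivalence in the partially commutative monoid `L(X, ≤)`. -/
def PCM.Equiv {X : Type*} [PartialOrder X] (w w' : List X) : Prop :=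
  Relation.ReflTransGen PCM.Adj w w'

/-- The rise set of a word `w = x₁ x₂ ⋯ xₙ` : the set of `i`,
`1 ≤ i ≤ n-1`, with `x_i < x_{i+1}` (0-based: `w[i-1] < w[i]`). -/
def PCM.ASC {X : Type*} [PartialOrder X] (w : List X) : Set ℕ :=
  {i | ∃ h : i < w.length, 0 < i ∧ w[i - 1]'(by omega) < w[i]'h}

/-!
Read a word from right to left and insert each letter into the word built so far, letting it
sink past every letter it is smaller than: this is insertion sort for the relation `¬ a < b`.
Each sinking step swaps two comparable distinct letters, so the result is equivalent to the
input, and it has no rise. Two comparable letters inserted in either order give the same word,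
so the result is constant on equivalence classes; and a word without rises is left unchanged.
-/

namespace List

variable {α : Type*} {r : α → α → Prop} [DecidableRel r]

theorem IsChain.orderedInsert [Std.Total r] (a : α) {l : List α} (hl : l.IsChain r) :
    (l.orderedInsert r a).IsChain r := by
  induction l with
  | nil => exact isChain_singleton a
  | cons b l ih =>
    by_cases hab : r a b
    · rw [orderedInsert_cons_of_le r l hab]
      exact hl.cons (by simpa using hab)
    · have hba := (total_of r a b).resolve_left hab
      rw [orderedInsert_of_not_le r l hab]
      refine (ih hl.tail).cons fun c hc => ?_
      -- the head `c` of `l.orderedInsert r a` is either `a` or the head of `l`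
      cases l <;> grind

theorem isChain_insertionSort [Std.Total r] (l : List α) : (l.insertionSort r).IsChain r := by
  induction l with
  | nil => exact isChain_nil
  | cons a l ih => exact ih.orderedInsert a

theorem IsChain.insertionSort_eq {l : List α} (hl : l.IsChain r) : l.insertionSort r = l := by
  induction l with
  | nil => rfl
  | cons a l ih =>
    rw [insertionSort_cons, ih hl.tail]
    rcases l with _ | ⟨b, l⟩
    · rfl
    · exact orderedInsert_cons_of_le r l (isChain_cons_cons.mp hl).1

end List

namespace PCM

open List

section NotLT

variable {α : Type*} [Preorder α]

instance : Std.Total (α := α) (¬ · < ·) :=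
  ⟨fun _ _ => not_and_or.mp fun h => lt_asymm h.1 h.2⟩

variable [DecidableLT α]

theorem orderedInsert_comm_of_lt {a b : α} (hab : a < b) (l : List α) :
    (l.orderedInsert (¬ · < ·) b).orderedInsert (¬ · < ·) a =
      (l.orderedInsert (¬ · < ·) a).orderedInsert (¬ · < ·) b := by
  induction l with
  | nil => simp [hab, lt_asymm hab]
  | cons c l ih =>
    by_cases hb : b < c
    · simp [hb, hab.trans hb, ih]
    · by_cases ha : a < c <;> simp [hb, ha, hab, lt_asymm hab]

end NotLT

variable {X : Type*} [PartialOrder X]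

theorem asc_eq_empty_iff_isChain (w : List X) : ASC w = ∅ ↔ w.IsChain (¬ · < ·) := by
  simp only [Set.eq_empty_iff_forall_notMem, ASC, Set.mem_ofPred_eq, isChain_iff_getElem]
  constructor
  · exact fun h i hi hlt => h (i + 1) ⟨hi, i.succ_pos, hlt⟩
  · rintro h (_ | i) ⟨hi, hpos, hlt⟩
    · exact hpos.false
    · exact h i hi hlt

theorem Adj.cons {w w' : List X} (c : X) (h : Adj w w') : Adj (c :: w) (c :: w') := by
  cases h with
  | swap u v a b hne hcomp => exact Adj.swap (c :: u) v a b hne hcomp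

theorem Equiv.cons {w w' : List X} (c : X) (h : Equiv w w') : Equiv (c :: w) (c :: w') :=
  Relation.ReflTransGen.lift (c :: ·) (fun _ _ => Adj.cons c) _ _ h

variable [DecidableLT X]

theorem equiv_orderedInsert (x : X) (w : List X) :
    Equiv (x :: w) (w.orderedInsert (¬ · < ·) x) := by
  induction w with
  | nil => exact Relation.ReflTransGen.refl
  | cons y w ih =>
    by_cases h : x < y
    · rw [orderedInsert_of_not_le _ w (not_not.mpr h)]
      exact .head (Adj.swap [] w x y h.ne (Or.inl h.le)) (ih.cons y)
    · rw [orderedInsert_cons_of_le _ w h]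
      exact .refl

theorem equiv_insertionSort (w : List X) : Equiv w (w.insertionSort (¬ · < ·)) := by
  induction w with
  | nil => exact Relation.ReflTransGen.refl
  | cons x w ih => exact (ih.cons x).trans (equiv_orderedInsert x _)

theorem Adj.insertionSort_eq {w w' : List X} (h : Adj w w') :
    w.insertionSort (¬ · < ·) = w'.insertionSort (¬ · < ·) := by
  cases h with
  | swap u v a b hne hcomp =>
    simp only [insertionSort, foldr_append, foldr_cons]
    rcases hcomp with hab | hba
    · rw [orderedInsert_comm_of_lt (hab.lt_of_ne hne)]
    · rw [orderedInsert_comm_of_lt (hba.lt_of_ne hne.symm)]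

theorem Equiv.insertionSort_eq {w w' : List X} (h : Equiv w w') :
    w.insertionSort (¬ · < ·) = w'.insertionSort (¬ · < ·) := by
  induction h with
  | refl => rfl
  | tail _ hadj ih => exact ih.trans hadj.insertionSort_eq

end PCM

/-- Each equivalence class of `L(X, ≤)` contains exactly one maximal word. -/
theorem stmt_1 {X : Type*} [PartialOrder X] (w : List X) :
    ∃! w' : List X, PCM.Equiv w w' ∧ PCM.ASC w' = ∅ := by
  classical
  refine ⟨w.insertionSort (¬ · < ·), ⟨PCM.equiv_insertionSort w, ?_⟩, ?_⟩
  · exact (PCM.asc_eq_empty_iff_isChain _).mpr (List.isChain_insertionSort w)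
  · rintro w' ⟨hequiv, hasc⟩
    rw [← ((PCM.asc_eq_empty_iff_isChain w').mp hasc).insertionSort_eq, hequiv.insertionSort_eq]
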